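/- Let P satisfy (IID), (WEL), (BD). Between consecutive regeneration times τ_1 < τ_2 of the k-min mob walk with regeneration positions x_1 < x_2, the total duration satisfies τ_2 - τ_1 = k(x_2 - x_1) + 2 Σ_{n≥1} D_n, where D_n is the number of downcrossings of the edge (x_2 - n, x_2 - n - 1) between times τ_1 and τ_2. Consequently 2 Σ_{n≥1} D_n ≤ τ_2 - τ_1 ≤ k + (2+k) Σ_{n≥1} D_n, and for every m ≥ 1 the m-th moment of τ_2 - τ_1 is finite if and only if the m-th moment of Σ_{n≥1} D_n is finite. -/

import Mathlib

open MeasureTheory Filter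

noncomputable section

attribute [local instance 10] Classical.propDecidable

/-- An arrow environment: for each site `x : ℤ` a sequence of arrows (values `±1`). -/
abbrev Env := ℤ → ℕ → ℤ

/-- A cookie environment. -/
abbrev CEnv := ℤ → ℕ → ℝ

/-- All arrows are `±1`. -/
def IsArrow (a : Env) : Prop := ∀ x n, a x n = 1 ∨ a x n = -1

/-- Non-degeneracy: in every column there are infinitely many sign changes. -/
def NonDeg (a : Env) : Prop := ∀ x : ℤ, ∀ N : ℕ, ∃ n, N ≤ n ∧ a x n ≠ a x (n + 1)

/-- State of the single walk on an arrow environment started at `x0`: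
position together with the local time function (number of visits so far). -/
def walkState (a : Env) (x0 : ℤ) : ℕ → ℤ × (ℤ → ℕ)
  | 0 => (x0, fun _ => 0)
  | t + 1 =>
    let s := walkState a x0 t
    let L' := Function.update s.2 s.1 (s.2 s.1 + 1)
    (s.1 + a s.1 (L' s.1), L')

/-- Position of the walk on `a` started at `x0` at time `t`. -/
def walkX (a : Env) (x0 : ℤ) (t : ℕ) : ℤ := (walkState a x0 t).1

/-- Asymptotic local time of the walk on `a` started at `x0`, at site `x`. -/
def walkLocal (a : Env) (x0 x : ℤ) : ℕ∞ := ⨆ t, ((walkState a x0 t).2 x : ℕ∞)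

/-- `a` is transient: the asymptotic local time of the walk started at `0` is finite everywhere. -/
def Transient (a : Env) : Prop := ∀ x : ℤ, walkLocal a 0 x < ⊤

/-- The leftover environment after the walk started at `0`. -/
def leftoverEnv (a : Env) : Env := fun x n => a x (n + (walkLocal a 0 x).toNat)

/-- Iterated leftover environments. -/
def iterLO (a : Env) : ℕ → Env
  | 0 => a
  | j + 1 => leftoverEnv (iterLO a j)

/-- `a` is `k`-transient. -/
def KTransient (a : Env) (k : ℕ) : Prop := ∀ j < k, Transient (iterLO a j)

/-- `a` is `k`-right transient: each of the `k` sequential walkers tends to `+∞`. -/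
def KRightTransient (a : Env) (k : ℕ) : Prop :=
  ∀ j < k, Tendsto (walkX (iterLO a j) 0) atTop atTop

/-- The sequential local time `L^{(k-seq)}`. -/
def seqLocal (a : Env) (k : ℕ) (x : ℤ) : ℕ :=
  ∑ j ∈ Finset.range k, (walkLocal (iterLO a j) 0 x).toNat

/-- State of the `S`-mob walk of `k` particles with initial positions `init`. -/
def mobState (a : Env) {k : ℕ} (S : ℕ → Fin k) (init : Fin k → ℤ) :
    ℕ → (Fin k → ℤ) × (ℤ → ℕ)
  | 0 => (init, fun _ => 0)
  | t + 1 =>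
    let s := mobState a S init t
    let pos := s.1 (S t)
    let L' := Function.update s.2 pos (s.2 pos + 1)
    (Function.update s.1 (S t) (pos + a pos (L' pos)), L')

/-- Asymptotic local time of the `S`-mob walk. -/
def mobLocal (a : Env) {k : ℕ} (S : ℕ → Fin k) (init : Fin k → ℤ) (x : ℤ) : ℕ∞ :=
  ⨆ t, ((mobState a S init t).2 x : ℕ∞)

/-- A `k`-scheduling is proper if every particle is chosen infinitely often. -/
def ProperSched {k : ℕ} (S : ℕ → Fin k) : Prop := ∀ j : Fin k, ∀ N : ℕ, ∃ t, N ≤ t ∧ S t = j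

/-- Smallest index attaining the minimum of `X`. -/
def minIdx {k : ℕ} (hk : k ≠ 0) (X : Fin k → ℤ) : Fin k :=
  (Finset.univ.filter fun j => ∀ i, X j ≤ X i).min' (by
    obtain ⟨j, -, hj⟩ := Finset.exists_min_image Finset.univ X
      ⟨⟨0, Nat.pos_of_ne_zero hk⟩, Finset.mem_univ _⟩
    exact ⟨j, Finset.mem_filter.mpr ⟨Finset.mem_univ _, fun i => hj i (Finset.mem_univ _)⟩⟩)

/-- State of the `k`-min mob walk: at every step the leftmost particle
(ties broken by particle index) moves. -/
def minMobState (a : Env) {k : ℕ} (hk : k ≠ 0) (init : Fin k → ℤ) :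
    ℕ → (Fin k → ℤ) × (ℤ → ℕ)
  | 0 => (init, fun _ => 0)
  | t + 1 =>
    let s := minMobState a hk init t
    let j := minIdx hk s.1
    let pos := s.1 j
    let L' := Function.update s.2 pos (s.2 pos + 1)
    (Function.update s.1 j (pos + a pos (L' pos)), L')

/-- The `k`-minimum walk: position of the leftmost particle of the `k`-min mob walk. -/
def minWalkPos (a : Env) {k : ℕ} (hk : k ≠ 0) (init : Fin k → ℤ) (t : ℕ) : ℤ :=
  (minMobState a hk init t).1 (minIdx hk (minMobState a hk init t).1)

/-- The position reached by the particle moved at step `t` of the `k`-min mob walk. -/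
def minMoveTo (a : Env) {k : ℕ} (hk : k ≠ 0) (init : Fin k → ℤ) (t : ℕ) : ℤ :=
  (minMobState a hk init (t + 1)).1 (minIdx hk (minMobState a hk init t).1)

/-- Asymptotic local time of the `k`-min mob walk. -/
def minMobLocal (a : Env) {k : ℕ} (hk : k ≠ 0) (init : Fin k → ℤ) (x : ℤ) : ℕ∞ :=
  ⨆ t, ((minMobState a hk init t).2 x : ℕ∞)

/-- `t` is earlier than the hitting time `t₋₁` of `-1` by the `k`-minimum walk started at `0`. -/
def beforeHit (a : Env) {k : ℕ} (hk : k ≠ 0) (t : ℕ) : Prop :=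
  ∀ s ≤ t, minWalkPos a hk (fun _ => 0) s ≠ -1

/-- The quantity `w_n` (an extended natural number): `w_0 = k`, and for `n ≠ 0`,
`w_n = #{t < t₋₁ : X_t = n-1, X moved to ≠ n-2}` for the `k`-min mob walk started at `0`. -/
def wfun (a : Env) {k : ℕ} (hk : k ≠ 0) (n : ℤ) : ℕ∞ :=
  if n = 0 then (k : ℕ∞) else
    ⨆ T, (((Finset.range T).filter fun t => beforeHit a hk t ∧
      minWalkPos a hk (fun _ => 0) t = n - 1 ∧
      minMoveTo a hk (fun _ => 0) t ≠ n - 2).card : ℕ∞)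

/-- Number of left crossings of the edge `(n, n-1)` by the `k`-min mob walk (started at `0`)
among the first `T` steps. -/
def leftCrossUpTo (a : Env) {k : ℕ} (hk : k ≠ 0) (n : ℤ) (T : ℕ) : ℕ :=
  ((Finset.range T).filter fun t => minWalkPos a hk (fun _ => 0) t = n ∧
    minMoveTo a hk (fun _ => 0) t = n - 1).card

/-- Total number of left crossings of the edge `(n, n-1)` by the `k`-min mob walk. -/
def leftCrossTotal (a : Env) {k : ℕ} (hk : k ≠ 0) (n : ℤ) : ℕ∞ :=
  ⨆ T, (leftCrossUpTo a hk n T : ℕ∞)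

/-- Number of left arrows (i.e. values `≠ 1`) among `c 1, …, c t`. -/
def leftsUpTo (c : ℕ → ℤ) (t : ℕ) : ℕ := ((Finset.Icc 1 t).filter fun i => c i ≠ 1).card

/-- Number of right arrows (i.e. values `= 1`) among `c 1, …, c t`. -/
def rightsUpTo (c : ℕ → ℤ) (t : ℕ) : ℕ := ((Finset.Icc 1 t).filter fun i => c i = 1).card

/-- The number of right arrows occurring in `c 1, c 2, …` before the `j`-th left arrow. -/
def rightsBeforeLefts (j : ℕ) (c : ℕ → ℤ) : ℕ := sInf {t | j ≤ leftsUpTo c t} - j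

/-- The number of left arrows occurring in `c 1, c 2, …` before the `j`-th right arrow. -/
def leftsBeforeRights (j : ℕ) (c : ℕ → ℤ) : ℕ := sInf {t | j ≤ rightsUpTo c t} - j

/-- The backward process `z` associated to an arrow environment and `k` particles:
`z 0 = k` and `z (n+1)` is the number of right arrows in column `n` occurring before
`z n - (k-1)` left arrows when `z n ≥ k`, and `0` otherwise. -/
def zProc (a : Env) (k : ℕ) : ℕ → ℕ
  | 0 => k
  | n + 1 =>
    if k ≤ zProc a k n then
      rightsBeforeLefts (zProc a k n - (k - 1)) (fun i => a (n : ℤ) i)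
    else 0

/-- `a` is `k`-right transient with respect to the initial positions `init`:
all particles of the `k`-min mob walk tend to `+∞`. -/
def KRightTransientFrom (a : Env) {k : ℕ} (hk : k ≠ 0) (init : Fin k → ℤ) : Prop :=
  ∀ j : Fin k, Tendsto (fun t => (minMobState a hk init t).1 j) atTop atTop

/-- `a` is strongly `k`-right transient. -/
def StronglyKRightTransient (a : Env) {k : ℕ} (hk : k ≠ 0) : Prop :=
  ∀ init : Fin k → ℤ, KRightTransientFrom a hk init

/-- The leftover environment of the `k`-mob walk with initial positions `init`. -/
def mobLO (a : Env) {k : ℕ} (hk : k ≠ 0) (init : Fin k → ℤ) : Env :=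
  fun x n => a x (n + (minMobLocal a hk init x).toNat)

/-- Shift on arrow environments. -/
def envShift : Env → Env := fun a x n => a (x + 1) n

/-- Shift on cookie environments. -/
def cookieShift : CEnv → CEnv := fun ω x n => ω (x + 1) n

/-- Restriction of an arrow environment to the nonnegative sites. -/
def restNonneg : Env → (ℕ → ℕ → ℤ) := fun a n i => a (n : ℤ) i

/-- Shift on one-sided environments. -/
def seqShift : (ℕ → ℕ → ℤ) → (ℕ → ℕ → ℤ) := fun b n i => b (n + 1) i

/-- The success probabilities for a bounded cookie stack `p` with `M` cookies per site
(fair coins afterwards). -/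
def qOf (M : ℕ) (p : ℕ → ℝ) (i : ℕ) : ℝ := if 1 ≤ i ∧ i ≤ M then p i else 1 / 2

/-- The expected total drift per site `δ`. -/
def driftSum (M : ℕ) (p : ℕ → ℝ) : ℝ := ∑ i ∈ Finset.Icc 1 M, (2 * p i - 1)

/-- `μ` is the annealed measure on arrow environments corresponding to i.i.d. cookie stacks
whose `i`-th cookie has strength `q i`: all arrows are independent and `a x i = 1` with
probability `q i`. -/
def IsAnnealedIID (μ : Measure Env) (q : ℕ → ℝ) : Prop :=
  ∀ (F : Finset (ℤ × ℕ)) (f : ℤ × ℕ → ℤ), (∀ pr ∈ F, f pr = 1 ∨ f pr = -1) →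
    μ {a : Env | ∀ pr ∈ F, a pr.1 pr.2 = f pr} =
      ENNReal.ofReal (∏ pr ∈ F, if f pr = 1 then q pr.2 else 1 - q pr.2)

/-- `μc` is the law of a single column of arrows with independent entries, `= 1` with
probability `q i`. -/
def IsIIDCol (μc : Measure (ℕ → ℤ)) (q : ℕ → ℝ) : Prop :=
  ∀ (F : Finset ℕ) (f : ℕ → ℤ), (∀ i ∈ F, f i = 1 ∨ f i = -1) →
    μc {c : ℕ → ℤ | ∀ i ∈ F, c i = f i} =
      ENNReal.ofReal (∏ i ∈ F, if f i = 1 then q i else 1 - q i)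

/-- `μ` is the annealed measure on arrow environments induced by the cookie measure `P`:
given `ω`, the arrows are independent with `ℙ(a x i = 1) = ω x i`. -/
def IsAnnealedOf (P : Measure CEnv) (μ : Measure Env) : Prop :=
  ∀ (F : Finset (ℤ × ℕ)) (f : ℤ × ℕ → ℤ), (∀ pr ∈ F, f pr = 1 ∨ f pr = -1) →
    μ {a : Env | ∀ pr ∈ F, a pr.1 pr.2 = f pr} =
      ∫⁻ ω, ∏ pr ∈ F,
        ENNReal.ofReal (if f pr = 1 then ω pr.1 pr.2 else 1 - ω pr.1 pr.2) ∂P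

/-- Hitting time of site `x` by the walk started at `0` (junk value if never hit). -/
def hitTime (a : Env) (x : ℤ) : ℕ := sInf {t | walkX a 0 t = x}

/-- Data expressing that `x1 < x2` are consecutive regeneration positions of the `k`-min mob
walk (all particles started at `0`) with hitting times `τ1 < τ2`. -/
def RegenData (a : Env) {k : ℕ} (hk : k ≠ 0) (τ1 τ2 : ℕ) (x1 x2 : ℤ) : Prop :=
  τ1 < τ2 ∧ 0 ≤ x1 ∧ x1 < x2 ∧
  minWalkPos a hk (fun _ => 0) τ1 = x1 ∧ minWalkPos a hk (fun _ => 0) τ2 = x2 ∧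
  (∀ s < τ1, minWalkPos a hk (fun _ => 0) s ≠ x1) ∧
  (∀ s < τ2, minWalkPos a hk (fun _ => 0) s ≠ x2) ∧
  (∀ t, ¬(minWalkPos a hk (fun _ => 0) t = x1 ∧ minMoveTo a hk (fun _ => 0) t = x1 - 1)) ∧
  (∀ t, ¬(minWalkPos a hk (fun _ => 0) t = x2 ∧ minMoveTo a hk (fun _ => 0) t = x2 - 1)) ∧
  (∀ y : ℤ, x1 < y → y < x2 →
    ∃ t, minWalkPos a hk (fun _ => 0) t = y ∧ minMoveTo a hk (fun _ => 0) t = y - 1)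

/-- `D_n`: the number of downcrossings of the edge `(x2 - n, x2 - n - 1)` by the `k`-min mob
walk strictly between times `τ1` and `τ2`. -/
def Dcount (a : Env) {k : ℕ} (hk : k ≠ 0) (τ1 τ2 : ℕ) (x2 : ℤ) (n : ℕ) : ℕ :=
  ((Finset.Ioo τ1 τ2).filter fun t => minWalkPos a hk (fun _ => 0) t = x2 - n ∧
    minWalkPos a hk (fun _ => 0) (t + 1) = x2 - (n : ℤ) - 1).card

/-- `Σ_{n ≥ 1} D_n` (the sum is supported on `n ≤ 2 τ2`). -/
def Dsum (a : Env) {k : ℕ} (hk : k ≠ 0) (τ1 τ2 : ℕ) (x2 : ℤ) : ℕ :=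
  ∑ n ∈ Finset.Icc 1 (2 * τ2), Dcount a hk τ1 τ2 x2 n


section Comb

variable {k : ℕ}

lemma minIdx_le (hk : k ≠ 0) (X : Fin k → ℤ) (i : Fin k) : X (minIdx hk X) ≤ X i := by
  have h : minIdx hk X ∈ Finset.univ.filter fun j => ∀ i, X j ≤ X i := Finset.min'_mem _ _
  exact (Finset.mem_filter.mp h).2 i

lemma step_cases (a : Env) (hk : k ≠ 0) (ha : IsArrow a) (init : Fin k → ℤ) (t : ℕ) :
    (minWalkPos a hk init (t+1) = minWalkPos a hk init t - 1 ∧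
      minMoveTo a hk init t = minWalkPos a hk init t - 1 ∧
      (∑ i, (minMobState a hk init (t+1)).1 i) = (∑ i, (minMobState a hk init t).1 i) - 1) ∨
    (minWalkPos a hk init t ≤ minWalkPos a hk init (t+1) ∧
      minWalkPos a hk init (t+1) ≤ minWalkPos a hk init t + 1 ∧
      minMoveTo a hk init t = minWalkPos a hk init t + 1 ∧
      (∑ i, (minMobState a hk init (t+1)).1 i) = (∑ i, (minMobState a hk init t).1 i) + 1) := by
  set s := minMobState a hk init t with hs
  set j := minIdx hk s.1 with hj
  set pos := s.1 j with hpos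
  set ar := a pos (s.2 pos + 1) with har
  have hupd : (minMobState a hk init (t+1)).1 = Function.update s.1 j (pos + ar) := by
    simp only [minMobState, ← hs, ← hj, ← hpos, Function.update_self, ← har]
  have hmove : minMoveTo a hk init t = pos + ar := by
    show (minMobState a hk init (t+1)).1 j = pos + ar
    rw [hupd, Function.update_self]
  have hXt : minWalkPos a hk init t = pos := rfl
  have hmin : ∀ i, pos ≤ s.1 i := fun i => minIdx_le hk s.1 i
  have hsum : (∑ i, (minMobState a hk init (t+1)).1 i) = (∑ i, s.1 i) + ar := by
    rw [hupd, Finset.sum_update_of_mem (Finset.mem_univ j)]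
    have h2 : s.1 j + ∑ x ∈ Finset.univ.erase j, s.1 x = ∑ x ∈ Finset.univ, s.1 x :=
      Finset.add_sum_erase _ _ (Finset.mem_univ j)
    rw [Finset.sdiff_singleton_eq_erase]
    omega
  have hXt1 : minWalkPos a hk init (t+1)
      = (Function.update s.1 j (pos + ar)) (minIdx hk (Function.update s.1 j (pos + ar))) := by
    show (minMobState a hk init (t+1)).1 (minIdx hk (minMobState a hk init (t+1)).1) = _
    rw [hupd]
  have hminle : (Function.update s.1 j (pos + ar)) (minIdx hk (Function.update s.1 j (pos + ar)))
      ≤ pos + ar := by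
    have := minIdx_le hk (Function.update s.1 j (pos + ar)) j
    rwa [Function.update_self] at this
  rcases ha pos (s.2 pos + 1) with h1 | h1
  · -- up step
    right
    rw [← har] at h1
    have hge : ∀ i, pos ≤ (Function.update s.1 j (pos + ar)) i := by
      intro i
      rcases eq_or_ne i j with rfl | hne
      · rw [Function.update_self]; omega
      · rw [Function.update_of_ne hne]; exact hmin i
    refine ⟨?_, ?_, ?_, ?_⟩
    · rw [hXt1, hXt]; exact hge _
    · rw [hXt1, hXt]; omega
    · rw [hmove, hXt, h1]
    · rw [hsum, h1]
  · -- down step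
    left
    rw [← har] at h1
    have hge : ∀ i, pos - 1 ≤ (Function.update s.1 j (pos + ar)) i := by
      intro i
      rcases eq_or_ne i j with rfl | hne
      · rw [Function.update_self]; omega
      · rw [Function.update_of_ne hne]; have := hmin i; omega
    have : minWalkPos a hk init (t+1) = pos - 1 := by
      rw [hXt1]
      have := hge (minIdx hk (Function.update s.1 j (pos + ar)))
      omega
    refine ⟨by rw [this, hXt], by rw [hmove, hXt, h1]; ring, by rw [hsum, h1]; ring⟩


lemma mob_step (a : Env) (hk : k ≠ 0) (ha : IsArrow a) (init : Fin k → ℤ) (t : ℕ) :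
    ∃ ar : ℤ, (ar = 1 ∨ ar = -1) ∧
      (minMobState a hk init (t+1)).1 =
        Function.update (minMobState a hk init t).1 (minIdx hk (minMobState a hk init t).1)
          (minWalkPos a hk init t + ar) := by
  refine ⟨a (minWalkPos a hk init t)
      ((minMobState a hk init t).2 (minWalkPos a hk init t) + 1), ha _ _, ?_⟩
  simp only [minMobState, Function.update_self]
  rfl

lemma pos_bound (a : Env) (hk : k ≠ 0) (ha : IsArrow a) (b : ℤ) (hb : 0 ≤ b) :
    ∀ T, (∀ s, s < T → minWalkPos a hk (fun _ => 0) s < b) →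
    ∀ i, (minMobState a hk (fun _ => 0) T).1 i ≤ b := by
  intro T
  induction T with
  | zero => intro _ i; exact hb
  | succ n ih =>
    intro hT i
    obtain ⟨ar, har, hupd⟩ := mob_step a hk ha (fun _ => 0) n
    rw [hupd]
    rcases eq_or_ne i (minIdx hk (minMobState a hk (fun _ => 0) n).1) with rfl | hne
    · rw [Function.update_self]
      have h1 : minWalkPos a hk (fun _ => 0) n < b := hT n (Nat.lt_succ_self n)
      omega
    · rw [Function.update_of_ne hne]
      exact ih (fun s hs => hT s (Nat.lt_succ_of_lt hs)) i

lemma X_zero (a : Env) (hk : k ≠ 0) : minWalkPos a hk (fun _ => 0) 0 = 0 := rfl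

lemma X_le_t (a : Env) (hk : k ≠ 0) (ha : IsArrow a) : ∀ t, minWalkPos a hk (fun _ => 0) t ≤ t := by
  intro t
  induction t with
  | zero => exact le_of_eq (X_zero a hk)
  | succ n ih =>
    rcases step_cases a hk ha (fun _ => 0) n with ⟨h1, -, -⟩ | ⟨-, h1, -, -⟩ <;>
      · push_cast; push_cast at ih; omega

theorem regen_comb (a : Env) (hk : k ≠ 0) (ha : IsArrow a) (t1 t2 : ℕ) (y1 y2 : ℤ)
    (R : RegenData a hk t1 t2 y1 y2) :
    t2 - t1 = k * (y2 - y1).toNat + 2 * Dsum a hk t1 t2 y2 ∧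
    2 * Dsum a hk t1 t2 y2 ≤ t2 - t1 ∧
    t2 - t1 ≤ k + (2 + k) * Dsum a hk t1 t2 y2 := by
  obtain ⟨hlt, hy1, hy12, hX1, hX2, hf1, hf2, hn1, hn2, hall⟩ := R
  have hstep := step_cases a hk ha (fun _ => 0)
  have hXle1 : ∀ t, minWalkPos a hk (fun _ => 0) (t+1) ≤ minWalkPos a hk (fun _ => 0) t + 1 := by
    intro t
    rcases hstep t with ⟨h1, -, -⟩ | ⟨-, h1, -, -⟩ <;> omega
  have hdown_iff : ∀ t, (minMoveTo a hk (fun _ => 0) t = minWalkPos a hk (fun _ => 0) t - 1 ↔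
      minWalkPos a hk (fun _ => 0) (t+1) = minWalkPos a hk (fun _ => 0) t - 1) := by
    intro t
    rcases hstep t with ⟨h1, h2, -⟩ | ⟨h1, -, h3, -⟩
    · exact ⟨fun _ => h1, fun _ => h2⟩
    · constructor <;> intro h <;> omega
  have cross : ∀ c : ℤ, 0 ≤ c → ∀ t, c ≤ minWalkPos a hk (fun _ => 0) t → ∃ s, s ≤ t ∧ minWalkPos a hk (fun _ => 0) s = c := by
    intro c hc t
    induction t with
    | zero =>
      intro h
      have h0 := X_zero a hk
      exact ⟨0, le_refl _, by omega⟩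
    | succ n ih =>
      intro h
      by_cases hn : c ≤ minWalkPos a hk (fun _ => 0) n
      · obtain ⟨s, hs, h'⟩ := ih hn
        exact ⟨s, Nat.le_succ_of_le hs, h'⟩
      · exact ⟨n+1, le_refl _, by have := hXle1 n; omega⟩
  have hlt1 : ∀ s, s < t1 → minWalkPos a hk (fun _ => 0) s < y1 := by
    intro s hs
    by_contra h
    obtain ⟨s', hs', he⟩ := cross y1 hy1 s (by omega)
    exact hf1 s' (lt_of_le_of_lt hs' hs) he
  have hy2 : (0:ℤ) ≤ y2 := by omega
  have hlt2 : ∀ s, s < t2 → minWalkPos a hk (fun _ => 0) s < y2 := by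
    intro s hs
    by_contra h
    obtain ⟨s', hs', he⟩ := cross y2 hy2 s (by omega)
    exact hf2 s' (lt_of_le_of_lt hs' hs) he
  have hge1 : ∀ d, y1 ≤ minWalkPos a hk (fun _ => 0) (t1 + d) := by
    intro d
    induction d with
    | zero => rw [Nat.add_zero, hX1]
    | succ n ih =>
      have hidx : t1 + (n+1) = (t1 + n) + 1 := rfl
      rw [hidx]
      rcases hstep (t1+n) with ⟨h1, h2, -⟩ | ⟨h1, -, -, -⟩
      · rcases eq_or_lt_of_le ih with heq | hlt'
        · exact absurd ⟨heq.symm, by rw [← heq] at h2; exact h2⟩ (hn1 (t1+n))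
        · omega
      · omega
  have hge1' : ∀ t, t1 ≤ t → y1 ≤ minWalkPos a hk (fun _ => 0) t := by
    intro t ht
    have := hge1 (t - t1)
    rwa [Nat.add_sub_cancel' ht] at this
  have hge2 : ∀ d, y2 ≤ minWalkPos a hk (fun _ => 0) (t2 + d) := by
    intro d
    induction d with
    | zero => rw [Nat.add_zero, hX2]
    | succ n ih =>
      have hidx : t2 + (n+1) = (t2 + n) + 1 := rfl
      rw [hidx]
      rcases hstep (t2+n) with ⟨h1, h2, -⟩ | ⟨h1, -, -, -⟩
      · rcases eq_or_lt_of_le ih with heq | hlt'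
        · exact absurd ⟨heq.symm, by rw [← heq] at h2; exact h2⟩ (hn2 (t2+n))
        · omega
      · omega
  have hge2' : ∀ t, t2 ≤ t → y2 ≤ minWalkPos a hk (fun _ => 0) t := by
    intro t ht
    have := hge2 (t - t2)
    rwa [Nat.add_sub_cancel' ht] at this
  -- all particles at y1 resp. y2
  have hAll1 : ∀ i, (minMobState a hk (fun _ => 0) t1).1 i = y1 := by
    intro i
    refine le_antisymm (pos_bound a hk ha y1 hy1 t1 hlt1 i) ?_
    have h := minIdx_le hk (minMobState a hk (fun _ => 0) t1).1 i
    rw [show (minMobState a hk (fun _ => 0) t1).1 (minIdx hk (minMobState a hk (fun _ => 0) t1).1) = minWalkPos a hk (fun _ => 0) t1 from rfl, hX1] at h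
    exact h
  have hAll2 : ∀ i, (minMobState a hk (fun _ => 0) t2).1 i = y2 := by
    intro i
    refine le_antisymm (pos_bound a hk ha y2 hy2 t2 hlt2 i) ?_
    have h := minIdx_le hk (minMobState a hk (fun _ => 0) t2).1 i
    rw [show (minMobState a hk (fun _ => 0) t2).1 (minIdx hk (minMobState a hk (fun _ => 0) t2).1) = minWalkPos a hk (fun _ => 0) t2 from rfl, hX2] at h
    exact h
  have hS1 : (∑ i, (minMobState a hk (fun _ => 0) t1).1 i) = (k:ℤ) * y1 := by
    rw [Finset.sum_congr rfl (fun i _ => hAll1 i)]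
    simp [Finset.sum_const, Finset.card_univ, nsmul_eq_mul]
  have hS2 : (∑ i, (minMobState a hk (fun _ => 0) t2).1 i) = (k:ℤ) * y2 := by
    rw [Finset.sum_congr rfl (fun i _ => hAll2 i)]
    simp [Finset.sum_const, Finset.card_univ, nsmul_eq_mul]
  -- telescoping
  have htel : ∀ d, (∑ i, (minMobState a hk (fun _ => 0) (t1+d)).1 i)
      = (∑ i, (minMobState a hk (fun _ => 0) t1).1 i) + (d:ℤ)
        - 2 * (((Finset.Ico t1 (t1+d)).filter fun t => minWalkPos a hk (fun _ => 0) (t+1) = minWalkPos a hk (fun _ => 0) t - 1).card : ℤ) := by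
    intro d
    induction d with
    | zero => simp
    | succ n ih =>
      have hidx : t1 + (n+1) = (t1 + n) + 1 := rfl
      have hins : Finset.Ico t1 ((t1+n)+1) = insert (t1+n) (Finset.Ico t1 (t1+n)) :=
        Nat.Ico_succ_right_eq_insert_Ico (Nat.le_add_right _ _)
      rw [hidx, hins, Finset.filter_insert]
      rcases hstep (t1+n) with ⟨h1, -, h3⟩ | ⟨h1, -, -, h3⟩
      · rw [if_pos h1, Finset.card_insert_of_notMem (by simp)]
        rw [h3, ih]
        push_cast
        ring
      · rw [if_neg (by intro hcon; omega)]
        rw [h3, ih]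
        push_cast
        ring
  have hd : t1 + (t2 - t1) = t2 := by omega
  have hkey := htel (t2 - t1)
  rw [hd, hS1, hS2] at hkey
  -- identify the down-crossing count with Dsum
  have hPmem : ∀ t ∈ Finset.Ioo t1 t2, y1 ≤ minWalkPos a hk (fun _ => 0) t ∧ minWalkPos a hk (fun _ => 0) t < y2 := by
    intro t ht
    rw [Finset.mem_Ioo] at ht
    exact ⟨hge1' t (le_of_lt ht.1), hlt2 t ht.2⟩
  have hIcoIoo : ((Finset.Ico t1 t2).filter fun t => minWalkPos a hk (fun _ => 0) (t+1) = minWalkPos a hk (fun _ => 0) t - 1)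
      = ((Finset.Ioo t1 t2).filter fun t => minWalkPos a hk (fun _ => 0) (t+1) = minWalkPos a hk (fun _ => 0) t - 1) := by
    ext t
    simp only [Finset.mem_filter, Finset.mem_Ico, Finset.mem_Ioo]
    constructor
    · rintro ⟨⟨ht1, ht2⟩, hP⟩
      by_cases hEq : t = t1
      · rw [hEq] at hP
        have h := (hdown_iff t1).mpr hP
        rw [hX1] at h
        exact absurd ⟨hX1, h⟩ (hn1 t1)
      · exact ⟨⟨lt_of_le_of_ne ht1 (Ne.symm hEq), ht2⟩, hP⟩
    · rintro ⟨⟨ht1, ht2⟩, hP⟩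
      exact ⟨⟨le_of_lt ht1, ht2⟩, hP⟩
  have hy2t2 : y2 ≤ (t2:ℤ) := by rw [← hX2]; exact X_le_t a hk ha t2
  have hfib : ((Finset.Ioo t1 t2).filter fun t => minWalkPos a hk (fun _ => 0) (t+1) = minWalkPos a hk (fun _ => 0) t - 1).card
      = Dsum a hk t1 t2 y2 := by
    rw [Dsum]
    rw [Finset.card_eq_sum_card_fiberwise
      (f := fun t => (y2 - minWalkPos a hk (fun _ => 0) t).toNat) (t := Finset.Icc 1 (2*t2)) ?_]
    · refine Finset.sum_congr rfl fun n hn => ?_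
      rw [Finset.mem_Icc] at hn
      congr 1
      rw [Finset.filter_filter]
      ext t
      simp only [Finset.mem_filter, Finset.mem_Ioo]
      constructor
      · rintro ⟨⟨hI1, hI2⟩, hdn, htn⟩
        have hfacts := hPmem t (Finset.mem_Ioo.mpr ⟨hI1, hI2⟩)
        refine ⟨⟨hI1, hI2⟩, by omega, by omega⟩
      · rintro ⟨⟨hI1, hI2⟩, he1, he2⟩
        have hfacts := hPmem t (Finset.mem_Ioo.mpr ⟨hI1, hI2⟩)
        refine ⟨⟨hI1, hI2⟩, by omega, by omega⟩
    · intro t ht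
      rw [Finset.mem_coe, Finset.mem_filter] at ht
      have hfacts := hPmem t ht.1
      rw [Finset.mem_coe, Finset.mem_Icc]
      beta_reduce
      constructor <;> omega
  rw [hIcoIoo, hfib] at hkey
  -- lower bound on Dsum
  have hone : ∀ n ∈ Finset.Icc 1 ((y2 - y1 - 1).toNat), 1 ≤ Dcount a hk t1 t2 y2 n := by
    intro n hn
    rw [Finset.mem_Icc] at hn
    obtain ⟨t, ht1, ht2⟩ := hall (y2 - n) (by omega) (by omega)
    have hdn : minWalkPos a hk (fun _ => 0) (t+1) = minWalkPos a hk (fun _ => 0) t - 1 :=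
      (hdown_iff t).mp (by rw [ht1]; exact ht2)
    have htlt : t < t2 := by
      by_contra h
      have := hge2' t (le_of_not_gt h)
      omega
    have htgt : t1 < t := by
      rcases lt_trichotomy t t1 with h | h | h
      · have := hlt1 t h; omega
      · rw [h, hX1] at ht1; omega
      · exact h
    refine Finset.card_pos.mpr ⟨t, ?_⟩
    rw [Finset.mem_filter, Finset.mem_Ioo]
    exact ⟨⟨htgt, htlt⟩, ht1, by omega⟩
  have hNle : ((y2 - y1 - 1).toNat) ≤ 2 * t2 := by omega
  have hlb : (y2 - y1 - 1).toNat ≤ Dsum a hk t1 t2 y2 := by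
    calc (y2 - y1 - 1).toNat
        = ∑ _n ∈ Finset.Icc 1 ((y2 - y1 - 1).toNat), 1 := by
          simp [Finset.sum_const, Nat.card_Icc]
      _ ≤ ∑ n ∈ Finset.Icc 1 ((y2 - y1 - 1).toNat), Dcount a hk t1 t2 y2 n :=
          Finset.sum_le_sum hone
      _ ≤ ∑ n ∈ Finset.Icc 1 (2 * t2), Dcount a hk t1 t2 y2 n :=
          Finset.sum_le_sum_of_subset (Finset.Icc_subset_Icc_right hNle)
      _ = Dsum a hk t1 t2 y2 := rfl
  -- final arithmetic
  have hu : (((y2 - y1).toNat : ℕ) : ℤ) = y2 - y1 := by omega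
  have key : ((t2 - t1 : ℕ) : ℤ)
      = ((k * (y2 - y1).toNat + 2 * Dsum a hk t1 t2 y2 : ℕ) : ℤ) := by
    push_cast
    rw [hu]
    have hcast : ((t2 - t1 : ℕ) : ℤ) = (t2 : ℤ) - (t1 : ℤ) := by omega
    rw [hcast]
    linarith [hkey]
  have hmain : t2 - t1 = k * (y2 - y1).toNat + 2 * Dsum a hk t1 t2 y2 := by
    exact_mod_cast key
  refine ⟨hmain, by omega, ?_⟩
  rw [hmain]
  have hu1 : (y2 - y1).toNat ≤ 1 + Dsum a hk t1 t2 y2 := by omega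
  calc k * (y2 - y1).toNat + 2 * Dsum a hk t1 t2 y2
      ≤ k * (1 + Dsum a hk t1 t2 y2) + 2 * Dsum a hk t1 t2 y2 :=
        Nat.add_le_add_right (Nat.mul_le_mul_left k hu1) _
    _ = k + (2 + k) * Dsum a hk t1 t2 y2 := by ring


lemma meas_eval (x : ℤ) (n : ℕ) (c : ℤ) : MeasurableSet {a : Env | a x n = c} := by
  have h : Measurable fun a : Env => a x n :=
    (measurable_pi_apply n).comp (measurable_pi_apply x)
  exact h (measurableSet_singleton c)

lemma ae_isArrow (M : ℕ) (p : ℕ → ℝ) (hp : ∀ i, 1 ≤ i → i ≤ M → 0 < p i ∧ p i < 1)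
    (μ : Measure Env) [IsProbabilityMeasure μ] (hμ : IsAnnealedIID μ (qOf M p)) :
    ∀ᵐ a ∂μ, IsArrow a := by
  have hq : ∀ i, 0 ≤ qOf M p i ∧ qOf M p i ≤ 1 := by
    intro i
    rw [qOf]
    split_ifs with h
    · have := hp i h.1 h.2; constructor <;> linarith
    · norm_num
  have key : ∀ x : ℤ, ∀ n : ℕ, μ {a : Env | ¬ (a x n = 1 ∨ a x n = -1)} = 0 := by
    intro x n
    have h1 := hμ {(x, n)} (fun _ => (1:ℤ)) (fun pr _ => Or.inl rfl)
    have h2 := hμ {(x, n)} (fun _ => (-1:ℤ)) (fun pr _ => Or.inr rfl)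
    simp only [Finset.mem_singleton, forall_eq, Finset.prod_singleton] at h1 h2
    norm_num at h1 h2
    have hAm := meas_eval x n 1
    have hBm := meas_eval x n (-1)
    have hdisj : Disjoint {a : Env | a x n = 1} {a : Env | a x n = -1} := by
      rw [Set.disjoint_left]
      rintro a ha hb
      simp only [Set.mem_setOf_eq] at ha hb
      omega
    have hcup : μ ({a : Env | a x n = 1} ∪ {a : Env | a x n = -1}) = 1 := by
      rw [measure_union hdisj hBm, h1, h2,
        ← ENNReal.ofReal_add (hq n).1 (by have := (hq n).2; linarith)]
      norm_num
    have hcompl : μ ({a : Env | a x n = 1} ∪ {a : Env | a x n = -1})ᶜ = 0 := by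
      rw [measure_compl (hAm.union hBm) (measure_ne_top μ _), hcup, measure_univ]
      simp
    refine measure_mono_null ?_ hcompl
    intro a ha
    simp only [Set.mem_setOf_eq] at ha
    simp only [Set.mem_compl_iff, Set.mem_union, Set.mem_setOf_eq]
    exact ha
  have hsub : {a : Env | ¬ IsArrow a} ⊆
      ⋃ (x : ℤ), ⋃ (n : ℕ), {a : Env | ¬ (a x n = 1 ∨ a x n = -1)} := by
    intro a ha
    simp only [Set.mem_setOf_eq, IsArrow, not_forall] at ha
    obtain ⟨x, n, h⟩ := ha
    exact Set.mem_iUnion.mpr ⟨x, Set.mem_iUnion.mpr ⟨n, h⟩⟩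
  have h0 : μ (⋃ (x : ℤ), ⋃ (n : ℕ), {a : Env | ¬ (a x n = 1 ∨ a x n = -1)}) = 0 :=
    measure_iUnion_null fun x => measure_iUnion_null fun n => key x n
  exact ae_iff.mpr (measure_mono_null hsub h0)

end Comb

/-- Between consecutive regeneration times of the `k`-min mob walk,
`τ2 - τ1 = k (x2 - x1) + 2 Σ_{n≥1} D_n`, hence
`2 Σ D_n ≤ τ2 - τ1 ≤ k + (2+k) Σ D_n`; consequently, under (IID), (WEL), (BD), for every
`m ≥ 1` the `m`-th moment of `τ2 - τ1` is finite iff that of `Σ_{n≥1} D_n` is finite. -/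
theorem regeneration_time_identity_and_moments
    (M : ℕ) (p : ℕ → ℝ) (hp : ∀ i, 1 ≤ i → i ≤ M → 0 < p i ∧ p i < 1)
    (μ : Measure Env) [IsProbabilityMeasure μ] (hμ : IsAnnealedIID μ (qOf M p))
    {k : ℕ} (hk : k ≠ 0)
    (τ1 τ2 : Env → ℕ) (x1 x2 : Env → ℤ)
    (hae : ∀ᵐ a ∂μ, RegenData a hk (τ1 a) (τ2 a) (x1 a) (x2 a)) :
    (∀ a : Env, IsArrow a → NonDeg a → ∀ t1 t2 : ℕ, ∀ y1 y2 : ℤ,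
      RegenData a hk t1 t2 y1 y2 →
        t2 - t1 = k * (y2 - y1).toNat + 2 * Dsum a hk t1 t2 y2 ∧
        2 * Dsum a hk t1 t2 y2 ≤ t2 - t1 ∧
        t2 - t1 ≤ k + (2 + k) * Dsum a hk t1 t2 y2) ∧
    (∀ m : ℕ, 1 ≤ m →
      ((∫⁻ a, ((τ2 a - τ1 a : ℕ) : ENNReal) ^ m ∂μ < ⊤) ↔
        (∫⁻ a, ((Dsum a hk (τ1 a) (τ2 a) (x2 a) : ℕ) : ENNReal) ^ m ∂μ < ⊤))) := by
  refine ⟨fun a ha _ t1 t2 y1 y2 R => regen_comb a hk ha t1 t2 y1 y2 R, ?_⟩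
  intro m hm
  have hA := ae_isArrow M p hp μ hμ
  have hboth : ∀ᵐ a ∂μ, 2 * Dsum a hk (τ1 a) (τ2 a) (x2 a) ≤ τ2 a - τ1 a ∧
      τ2 a - τ1 a ≤ k + (2 + k) * Dsum a hk (τ1 a) (τ2 a) (x2 a) := by
    filter_upwards [hA, hae] with a ha hr
    obtain ⟨-, h2, h3⟩ := regen_comb a hk ha (τ1 a) (τ2 a) (x1 a) (x2 a) hr
    exact ⟨h2, h3⟩
  set C := 2 * (k + 2) with hC
  constructor
  · intro hfin
    refine lt_of_le_of_lt (lintegral_mono_ae ?_) hfin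
    filter_upwards [hboth] with a ⟨h2, h3⟩
    have hle : Dsum a hk (τ1 a) (τ2 a) (x2 a) ≤ τ2 a - τ1 a := by omega
    gcongr
  · intro hfin
    have hptw : ∀ᵐ a ∂μ, ((τ2 a - τ1 a : ℕ) : ENNReal) ^ m ≤
        ((C : ENNReal)) ^ m * (1 + ((Dsum a hk (τ1 a) (τ2 a) (x2 a) : ℕ) : ENNReal) ^ m) := by
      filter_upwards [hboth] with a ⟨h2, h3⟩
      have hnat : (τ2 a - τ1 a) ^ m ≤ C ^ m * (1 + (Dsum a hk (τ1 a) (τ2 a) (x2 a)) ^ m) := by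
        set D := Dsum a hk (τ1 a) (τ2 a) (x2 a) with hD
        rcases Nat.eq_zero_or_pos D with h0 | h0
        · rw [h0] at h3
          calc (τ2 a - τ1 a) ^ m ≤ C ^ m := Nat.pow_le_pow_left (by omega) m
            _ ≤ C ^ m * (1 + 0 ^ m) := Nat.le_mul_of_pos_right _ (by positivity)
            _ = C ^ m * (1 + D ^ m) := by rw [h0]
        · have hk' : k ≤ k * D := Nat.le_mul_of_pos_right k h0
          have hstep : τ2 a - τ1 a ≤ C * D := by
            have : (2 + k) * D + k * D = (2 + 2 * k) * D := by ring
            have hCD : (2 + 2 * k) * D ≤ C * D := Nat.mul_le_mul_right D (by omega)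
            omega
          calc (τ2 a - τ1 a) ^ m ≤ (C * D) ^ m := Nat.pow_le_pow_left hstep m
            _ = C ^ m * D ^ m := mul_pow C D m
            _ ≤ C ^ m * (1 + D ^ m) :=
                Nat.mul_le_mul_left _ (Nat.le_add_left _ _)
      exact_mod_cast hnat
    have hCne : ((C : ENNReal)) ^ m ≠ ⊤ := by
      exact ENNReal.pow_ne_top (ENNReal.natCast_ne_top C)
    calc ∫⁻ a, ((τ2 a - τ1 a : ℕ) : ENNReal) ^ m ∂μ
        ≤ ∫⁻ a, ((C : ENNReal)) ^ m *
            (1 + ((Dsum a hk (τ1 a) (τ2 a) (x2 a) : ℕ) : ENNReal) ^ m) ∂μ :=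
          lintegral_mono_ae hptw
      _ = ((C : ENNReal)) ^ m *
            ∫⁻ a, (1 + ((Dsum a hk (τ1 a) (τ2 a) (x2 a) : ℕ) : ENNReal) ^ m) ∂μ :=
          lintegral_const_mul' _ _ hCne
      _ = ((C : ENNReal)) ^ m *
            (∫⁻ _, (1 : ENNReal) ∂μ +
              ∫⁻ a, ((Dsum a hk (τ1 a) (τ2 a) (x2 a) : ℕ) : ENNReal) ^ m ∂μ) := by
          rw [lintegral_add_left measurable_const]
      _ < ⊤ := by
          rw [lintegral_one, measure_univ]
          exact ENNReal.mul_lt_top hCne.lt_top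
            (ENNReal.add_lt_top.mpr ⟨ENNReal.one_lt_top, hfin⟩)

end
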